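/- Let r, γ, T* > 0 and let ρ, ψ ∈ B_{T*,γ}(r). Then for all s ∈ [0, T*] and x ∈ ℝ^d, |R₂(ρ_s, x) − R₂(ψ_s, x)| ≤ [ (3/2) ⟨c₁⟩ e^{γ⟨c₂⟩s} ( 2 e^{γ⟨c₂⟩s} r + e^{2γ⟨c₂⟩s} ⟨φ₁⟩ r² ) + 2 ⟨c₂⟩ e^{γ⟨c₂⟩s} ( e^{γ⟨c₂⟩s} ⟨φ₂⟩ r + 1 ) ] ‖ρ − ψ‖_{T*,γ}. -/

import Mathlib

open MeasureTheory Set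

noncomputable section

/-- Euclidean space `ℝ^d`, modeled as functions `Fin d → ℝ`. -/
abbrev Rd (d : ℕ) := Fin d → ℝ

/-- The (sup) `L^∞` norm of a function on `ℝ^d`. -/
def linf {d : ℕ} (f : Rd d → ℝ) : ℝ := ⨆ x, |f x|

/-- Membership in `L^∞(ℝ^d)`: measurable and (everywhere) bounded. -/
def MemLinf {d : ℕ} (f : Rd d → ℝ) : Prop := Measurable f ∧ ∃ M : ℝ, ∀ x, |f x| ≤ M

/-- `h(ρ,x) = (1/2) ∬ (c₁(x,y;z)+c₁(y,x;z)) ρ(y) dy dz + ⟨c₂⟩`. -/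
def hker {d : ℕ} (c₁ : Rd d → Rd d → Rd d → ℝ) (C2 : ℝ) (ρ : Rd d → ℝ) (x : Rd d) : ℝ :=
  1/2 * (∫ y, ∫ z, (c₁ x y z + c₁ y x z) * ρ y) + C2

/-- `R₂(ρ,x)`, the positive part of the right-hand side of the kinetic equation. -/
def R2 {d : ℕ} (c₁ : Rd d → Rd d → Rd d → ℝ) (c₂ : Rd d → Rd d → ℝ)
    (φ₁ φ₂ : Rd d → ℝ) (ρ : Rd d → ℝ) (x : Rd d) : ℝ :=
  1/2 * (∫ y, ∫ z, c₁ y z x * Real.exp (-∫ u, φ₁ (x - u) * ρ u) * ρ y * ρ z)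
    + 1/2 * (∫ y, ∫ z, (c₁ x y z + c₁ y x z) *
        (1 - Real.exp (-∫ u, φ₁ (z - u) * ρ u)) * ρ x * ρ y)
    + (∫ y, c₂ y x * Real.exp (-∫ u, φ₂ (x - u) * ρ u) * ρ y)
    + (∫ y, c₂ x y * (1 - Real.exp (-∫ u, φ₂ (y - u) * ρ u)) * ρ x)

/-- The fixed point map `F` given by the right-hand side of the integral equation. -/
def Fmap {d : ℕ} (c₁ : Rd d → Rd d → Rd d → ℝ) (c₂ : Rd d → Rd d → ℝ)
    (φ₁ φ₂ : Rd d → ℝ) (C2 : ℝ) (ρ₀ : Rd d → ℝ) (ρ : ℝ → Rd d → ℝ) (t : ℝ) (x : Rd d) : ℝ :=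
  ρ₀ x * Real.exp (-∫ s in (0:ℝ)..t, hker c₁ C2 (ρ s) x)
    + ∫ s in (0:ℝ)..t, R2 c₁ c₂ φ₁ φ₂ (ρ s) x * Real.exp (-∫ σ in s..t, hker c₁ C2 (ρ σ) x)

/-- The weighted norm `‖ρ‖_{T,γ} = sup_{t∈[0,T]} e^{-γ⟨c₂⟩t} ‖ρ_t‖_{L^∞}`. -/
def normTg {d : ℕ} (T γ C2 : ℝ) (ρ : ℝ → Rd d → ℝ) : ℝ :=
  ⨆ t : Icc (0:ℝ) T, Real.exp (-(γ * C2 * t.1)) * linf (ρ t.1)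

/-- Continuity on `S ⊆ ℝ` of a curve of functions, in the `L^∞` norm. -/
def LinfContOn {d : ℕ} (S : Set ℝ) (ρ : ℝ → Rd d → ℝ) : Prop :=
  ∀ t ∈ S, ∀ ε > 0, ∃ δ > 0, ∀ s ∈ S, |s - t| < δ → linf (fun x => ρ s x - ρ t x) < ε

/-- Membership in the ball `B_{T,γ}(r) ⊆ C([0,T] → L^∞)`. -/
def memB {d : ℕ} (T γ C2 r : ℝ) (ρ : ℝ → Rd d → ℝ) : Prop :=
  LinfContOn (Icc 0 T) ρ ∧ (∀ t ∈ Icc (0:ℝ) T, MemLinf (ρ t)) ∧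
    (∀ t ∈ Icc (0:ℝ) T, ∀ x, 0 ≤ ρ t x) ∧ normTg T γ C2 ρ ≤ r

/-- Differentiability at `t` (within `S ⊆ ℝ`) of a curve, in the `L^∞` norm,
with derivative `g`. -/
def HasLinfDerivWithinAt {d : ℕ} (ρ : ℝ → Rd d → ℝ) (g : Rd d → ℝ) (S : Set ℝ) (t : ℝ) : Prop :=
  ∀ ε > 0, ∃ δ > 0, ∀ s ∈ S, |s - t| < δ →
    linf (fun x => ρ s x - ρ t x - (s - t) * g x) ≤ ε * |s - t|

/-- The right-hand side of the kinetic equation: `−ρ(x) h(ρ,x) + R₂(ρ,x)`. -/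
def kderiv {d : ℕ} (c₁ : Rd d → Rd d → Rd d → ℝ) (c₂ : Rd d → Rd d → ℝ)
    (φ₁ φ₂ : Rd d → ℝ) (C2 : ℝ) (ρ : Rd d → ℝ) : Rd d → ℝ :=
  fun x => -(ρ x) * hker c₁ C2 ρ x + R2 c₁ c₂ φ₁ φ₂ ρ x

/-- `ρ` is a (local) classical solution of the kinetic equation on `[0,T]` with initial
value `ρ₀`: nonnegative and `L^∞`-valued, continuously differentiable in the `L^∞` norm,
and satisfying `d/dt ρ_t = −ρ_t·h(ρ_t,·) + R₂(ρ_t,·)`, `ρ_0 = ρ₀`. -/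
def IsSol {d : ℕ} (c₁ : Rd d → Rd d → Rd d → ℝ) (c₂ : Rd d → Rd d → ℝ)
    (φ₁ φ₂ : Rd d → ℝ) (C2 : ℝ) (ρ₀ : Rd d → ℝ) (T : ℝ) (ρ : ℝ → Rd d → ℝ) : Prop :=
  (∀ t ∈ Icc (0:ℝ) T, MemLinf (ρ t)) ∧ (∀ t ∈ Icc (0:ℝ) T, ∀ x, 0 ≤ ρ t x) ∧
    ρ 0 = ρ₀ ∧
    (∀ t ∈ Icc (0:ℝ) T, HasLinfDerivWithinAt ρ (kderiv c₁ c₂ φ₁ φ₂ C2 (ρ t)) (Icc 0 T) t) ∧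
    LinfContOn (Icc 0 T) (fun t => kderiv c₁ c₂ φ₁ φ₂ C2 (ρ t))

/-!
Each of the four terms of `R₂` integrates a nonnegative kernel of total mass `⟨c₁⟩`
(`2⟨c₁⟩` for the symmetrised one) or `⟨c₂⟩` against a product of an exponential factor with
values in `[0, 1]` and one or two densities with values in `[0, M]`, `M = e^{γ⟨c₂⟩s} r`.
Since `t ↦ e^{-t}` is 1-Lipschitz on `[0, ∞)`, the exponential factor moves by at most
`⟨φ⟩ δ` when the density moves by `δ = e^{γ⟨c₂⟩s} ‖ρ - ψ‖_{T,γ}` pointwise; telescoping the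
products then bounds the difference of each term by its kernel mass times
`⟨φ⟩ δ M² + 2 M δ` or `⟨φ⟩ δ M + δ`.
-/

lemma abs_exp_neg_sub_exp_neg_le {p q : ℝ} (hp : 0 ≤ p) (hq : 0 ≤ q) :
    |Real.exp (-p) - Real.exp (-q)| ≤ |p - q| := by
  wlog hqp : q ≤ p generalizing p q
  · rw [abs_sub_comm, abs_sub_comm p]
    exact this hq hp (le_of_not_ge hqp)
  have hfactor : Real.exp (-q) - Real.exp (-p) = Real.exp (-q) * (1 - Real.exp (-(p - q))) := by
    rw [mul_sub, mul_one, ← Real.exp_add]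
    ring_nf
  have hexp_le : Real.exp (-q) ≤ 1 := Real.exp_le_one_iff.2 (neg_nonpos.2 hq)
  have hgap : 0 ≤ 1 - Real.exp (-(p - q)) :=
    sub_nonneg.2 (Real.exp_le_one_iff.2 (neg_nonpos.2 (sub_nonneg.2 hqp)))
  rw [abs_sub_comm, abs_of_nonneg (sub_nonneg.2 (Real.exp_le_exp.2 (neg_le_neg hqp))),
    abs_of_nonneg (sub_nonneg.2 hqp), hfactor]
  calc Real.exp (-q) * (1 - Real.exp (-(p - q))) ≤ 1 * (p - q) :=
        mul_le_mul hexp_le (by linarith [Real.add_one_le_exp (-(p - q))]) hgap zero_le_one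
    _ = p - q := one_mul _

lemma abs_le_of_mem_Icc_zero {y M : ℝ} (hy : y ∈ Icc 0 M) : |y| ≤ M := by
  rw [abs_of_nonneg hy.1]
  exact hy.2

lemma abs_mul_le_of_le {E p M : ℝ} (hE : |E| ≤ 1) (hp : |p| ≤ M) : |E * p| ≤ M :=
  calc |E * p| = |E| * |p| := abs_mul E p
    _ ≤ 1 * M := mul_le_mul hE hp (abs_nonneg _) zero_le_one
    _ = M := one_mul M

lemma abs_mul_mul_le_of_le {E p q M : ℝ} (hE : |E| ≤ 1) (hp : |p| ≤ M) (hq : |q| ≤ M) :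
    |E * p * q| ≤ M ^ 2 :=
  calc |E * p * q| = |E * p| * |q| := abs_mul _ q
    _ ≤ M * M := mul_le_mul (abs_mul_le_of_le hE hp) hq (abs_nonneg _) ((abs_nonneg _).trans hp)
    _ = M ^ 2 := (sq M).symm

lemma abs_mul_sub_mul_le_of_le {E E' p p' K M δ : ℝ} (hE : |E| ≤ 1) (hp' : |p'| ≤ M)
    (hEE' : |E - E'| ≤ K) (hpp' : |p - p'| ≤ δ) :
    |E * p - E' * p'| ≤ K * M + δ :=
  calc |E * p - E' * p'| = |(E - E') * p' + E * (p - p')| := by congr 1; ring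
    _ ≤ |E - E'| * |p'| + |E| * |p - p'| := by
        rw [← abs_mul, ← abs_mul]
        exact abs_add_le _ _
    _ ≤ K * M + 1 * δ := by
        gcongr
        exact (abs_nonneg _).trans hEE'
    _ = K * M + δ := by rw [one_mul]

lemma abs_mul_mul_sub_mul_mul_le_of_le {E E' p p' q q' K M δ : ℝ} (hE : |E| ≤ 1)
    (hE' : |E'| ≤ 1) (hp' : |p'| ≤ M) (hq : |q| ≤ M) (hEE' : |E - E'| ≤ K)
    (hpp' : |p - p'| ≤ δ) (hqq' : |q - q'| ≤ δ) :
    |E * p * q - E' * p' * q'| ≤ K * M ^ 2 + 2 * M * δ := by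
  have hM : 0 ≤ M := (abs_nonneg _).trans hq
  have hK : 0 ≤ K := (abs_nonneg _).trans hEE'
  have hδ : 0 ≤ δ := (abs_nonneg _).trans hqq'
  calc |E * p * q - E' * p' * q'| = |(E * p - E' * p') * q + E' * p' * (q - q')| := by
        congr 1; ring
    _ ≤ |E * p - E' * p'| * |q| + |E'| * |p'| * |q - q'| := by
        rw [← abs_mul, ← abs_mul, ← abs_mul]
        exact abs_add_le _ _
    _ ≤ (K * M + δ) * M + 1 * M * δ := by
        gcongr
        exact abs_mul_sub_mul_le_of_le hE hp' hEE' hpp'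
    _ = K * M ^ 2 + 2 * M * δ := by ring

section KernelIntegral

variable {α β : Type*} [MeasurableSpace α] [MeasurableSpace β] {μ : Measure α} {ν : Measure β}

lemma abs_integral_mul_sub_integral_mul_le {k F G : α → ℝ} {B ε : ℝ} (hk : Integrable k μ)
    (hk₀ : ∀ a, 0 ≤ k a) (hF : AEStronglyMeasurable F μ) (hG : AEStronglyMeasurable G μ)
    (hFB : ∀ a, |F a| ≤ B) (hGB : ∀ a, |G a| ≤ B) (hFG : ∀ a, |F a - G a| ≤ ε) :
    |∫ a, k a * F a ∂μ - ∫ a, k a * G a ∂μ| ≤ (∫ a, k a ∂μ) * ε := by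
  rw [← integral_sub (hk.mul_bdd hF (ae_of_all _ hFB)) (hk.mul_bdd hG (ae_of_all _ hGB)),
    ← integral_mul_const, ← Real.norm_eq_abs]
  refine norm_integral_le_of_norm_le (hk.mul_const ε) (ae_of_all _ fun a => ?_)
  rw [Real.norm_eq_abs, ← mul_sub, abs_mul, abs_of_nonneg (hk₀ a)]
  exact mul_le_mul_of_nonneg_left (hFG a) (hk₀ a)

lemma abs_integral_integral_mul_sub_le [SFinite μ] [SFinite ν] {k F G : α → β → ℝ} {B ε : ℝ}
    (hk : Integrable (Function.uncurry k) (μ.prod ν)) (hk₀ : ∀ a b, 0 ≤ k a b)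
    (hF : AEStronglyMeasurable (Function.uncurry F) (μ.prod ν))
    (hG : AEStronglyMeasurable (Function.uncurry G) (μ.prod ν))
    (hFB : ∀ a b, |F a b| ≤ B) (hGB : ∀ a b, |G a b| ≤ B) (hFG : ∀ a b, |F a b - G a b| ≤ ε) :
    |∫ a, ∫ b, k a b * F a b ∂ν ∂μ - ∫ a, ∫ b, k a b * G a b ∂ν ∂μ|
      ≤ (∫ a, ∫ b, k a b ∂ν ∂μ) * ε := by
  rw [integral_integral (hk.mul_bdd hF (ae_of_all _ fun p => hFB p.1 p.2)),
    integral_integral (hk.mul_bdd hG (ae_of_all _ fun p => hGB p.1 p.2)), integral_integral hk]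
  exact abs_integral_mul_sub_integral_mul_le hk (fun p => hk₀ p.1 p.2) hF hG
    (fun p => hFB p.1 p.2) (fun p => hGB p.1 p.2) (fun p => hFG p.1 p.2)

end KernelIntegral

section ExpNegConv

variable {d : ℕ} {φ a b : Rd d → ℝ} {Φ M δ : ℝ}

def expNegConv (φ a : Rd d → ℝ) (x : Rd d) : ℝ := Real.exp (-∫ u, φ (x - u) * a u)

lemma integral_conv_nonneg (hφ₀ : ∀ u, 0 ≤ φ u) (ha₀ : ∀ u, 0 ≤ a u) (x : Rd d) :
    0 ≤ ∫ u, φ (x - u) * a u :=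
  integral_nonneg fun u => mul_nonneg (hφ₀ _) (ha₀ u)

lemma expNegConv_mem_Icc (hφ₀ : ∀ u, 0 ≤ φ u) (ha₀ : ∀ u, 0 ≤ a u) (x : Rd d) :
    expNegConv φ a x ∈ Icc 0 1 :=
  ⟨Real.exp_nonneg _, Real.exp_le_one_iff.2 (neg_nonpos.2 (integral_conv_nonneg hφ₀ ha₀ x))⟩

lemma abs_expNegConv_le_one (hφ₀ : ∀ u, 0 ≤ φ u) (ha₀ : ∀ u, 0 ≤ a u) (x : Rd d) :
    |expNegConv φ a x| ≤ 1 :=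
  abs_le_of_mem_Icc_zero (expNegConv_mem_Icc hφ₀ ha₀ x)

lemma abs_one_sub_expNegConv_le_one (hφ₀ : ∀ u, 0 ≤ φ u) (ha₀ : ∀ u, 0 ≤ a u) (x : Rd d) :
    |1 - expNegConv φ a x| ≤ 1 := by
  obtain ⟨hE₀, hE₁⟩ := expNegConv_mem_Icc hφ₀ ha₀ x
  exact abs_le_of_mem_Icc_zero ⟨sub_nonneg.2 hE₁, by linarith⟩

lemma measurable_expNegConv (hφ : Measurable φ) (ha : Measurable a) :
    Measurable (expNegConv φ a) := by
  have hconv : StronglyMeasurable fun q : Rd d × Rd d => φ (q.1 - q.2) * a q.2 :=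
    ((hφ.comp (measurable_fst.sub measurable_snd)).mul (ha.comp measurable_snd)).stronglyMeasurable
  exact Real.measurable_exp.comp hconv.integral_prod_right'.measurable.neg

lemma abs_expNegConv_sub_le (hφ : Integrable φ) (hφ₀ : ∀ u, 0 ≤ φ u) (hΦ : ∫ u, φ u = Φ)
    (ha : Measurable a) (hb : Measurable b) (haM : ∀ u, a u ∈ Icc 0 M)
    (hbM : ∀ u, b u ∈ Icc 0 M) (hab : ∀ u, |a u - b u| ≤ δ) (x : Rd d) :
    |expNegConv φ a x - expNegConv φ b x| ≤ Φ * δ := by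
  refine (abs_exp_neg_sub_exp_neg_le (integral_conv_nonneg hφ₀ (fun u => (haM u).1) x)
    (integral_conv_nonneg hφ₀ (fun u => (hbM u).1) x)).trans ?_
  have hconv := abs_integral_mul_sub_integral_mul_le (hφ.comp_sub_left x) (fun u => hφ₀ _)
    ha.aestronglyMeasurable hb.aestronglyMeasurable (fun u => abs_le_of_mem_Icc_zero (haM u))
    (fun u => abs_le_of_mem_Icc_zero (hbM u)) hab
  rwa [integral_sub_left_eq_self φ volume x, hΦ] at hconv

lemma abs_one_sub_expNegConv_sub_le (hφ : Integrable φ) (hφ₀ : ∀ u, 0 ≤ φ u)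
    (hΦ : ∫ u, φ u = Φ) (ha : Measurable a) (hb : Measurable b) (haM : ∀ u, a u ∈ Icc 0 M)
    (hbM : ∀ u, b u ∈ Icc 0 M) (hab : ∀ u, |a u - b u| ≤ δ) (x : Rd d) :
    |(1 - expNegConv φ a x) - (1 - expNegConv φ b x)| ≤ Φ * δ := by
  rw [sub_sub_sub_cancel_left, abs_sub_comm]
  exact abs_expNegConv_sub_le hφ hφ₀ hΦ ha hb haM hbM hab x

end ExpNegConv

section GainTerms

variable {d : ℕ} {c₁ : Rd d → Rd d → Rd d → ℝ} {c₂ : Rd d → Rd d → ℝ} {φ a b : Rd d → ℝ}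
  {C Φ M δ : ℝ} {x : Rd d}

/- The four gain terms of `R2`: a particle arrives at `x` through a binary or a unary
reaction, or a particle stays at `x` because the reaction it took part in was blocked. -/

def binaryArrival (c₁ : Rd d → Rd d → Rd d → ℝ) (φ a : Rd d → ℝ) (x : Rd d) : ℝ :=
  ∫ y, ∫ z, c₁ y z x * expNegConv φ a x * a y * a z

def binaryBlocked (c₁ : Rd d → Rd d → Rd d → ℝ) (φ a : Rd d → ℝ) (x : Rd d) : ℝ :=
  ∫ y, ∫ z, (c₁ x y z + c₁ y x z) * (1 - expNegConv φ a z) * a x * a y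

def unaryArrival (c₂ : Rd d → Rd d → ℝ) (φ a : Rd d → ℝ) (x : Rd d) : ℝ :=
  ∫ y, c₂ y x * expNegConv φ a x * a y

def unaryBlocked (c₂ : Rd d → Rd d → ℝ) (φ a : Rd d → ℝ) (x : Rd d) : ℝ :=
  ∫ y, c₂ x y * (1 - expNegConv φ a y) * a x

lemma R2_eq (c₁ : Rd d → Rd d → Rd d → ℝ) (c₂ : Rd d → Rd d → ℝ) (φ₁ φ₂ a : Rd d → ℝ)
    (x : Rd d) :
    R2 c₁ c₂ φ₁ φ₂ a x = 1/2 * binaryArrival c₁ φ₁ a x + 1/2 * binaryBlocked c₁ φ₁ a x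
      + unaryArrival c₂ φ₂ a x + unaryBlocked c₂ φ₂ a x :=
  rfl

lemma abs_binaryArrival_sub_le (hc₁ : Integrable fun p : Rd d × Rd d => c₁ p.1 p.2 x)
    (hc₁₀ : ∀ x y z, 0 ≤ c₁ x y z) (hC : ∫ y, ∫ z, c₁ y z x = C)
    (hφ : Integrable φ) (hφ₀ : ∀ u, 0 ≤ φ u) (hΦ : ∫ u, φ u = Φ)
    (ha : Measurable a) (hb : Measurable b) (haM : ∀ u, a u ∈ Icc 0 M)
    (hbM : ∀ u, b u ∈ Icc 0 M) (hab : ∀ u, |a u - b u| ≤ δ) :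
    |binaryArrival c₁ φ a x - binaryArrival c₁ φ b x| ≤ C * (Φ * δ * M ^ 2 + 2 * M * δ) := by
  have hE := abs_expNegConv_sub_le hφ hφ₀ hΦ ha hb haM hbM hab x
  have hEa := abs_expNegConv_le_one hφ₀ (fun u => (haM u).1) x
  have hEb := abs_expNegConv_le_one hφ₀ (fun u => (hbM u).1) x
  have haM' u := abs_le_of_mem_Icc_zero (haM u)
  have hbM' u := abs_le_of_mem_Icc_zero (hbM u)
  have key := abs_integral_integral_mul_sub_le (k := fun y z => c₁ y z x)
    (F := fun y z => expNegConv φ a x * a y * a z) (G := fun y z => expNegConv φ b x * b y * b z)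
    hc₁ (fun y z => hc₁₀ y z x) (by fun_prop) (by fun_prop)
    (fun y z => abs_mul_mul_le_of_le hEa (haM' y) (haM' z))
    (fun y z => abs_mul_mul_le_of_le hEb (hbM' y) (hbM' z))
    (fun y z => abs_mul_mul_sub_mul_mul_le_of_le hEa hEb (hbM' y) (haM' z) hE (hab y) (hab z))
  simpa only [binaryArrival, mul_assoc, hC] using key

lemma abs_binaryBlocked_sub_le (hc₁ : Integrable fun p : Rd d × Rd d => c₁ x p.1 p.2)
    (hc₁' : Integrable fun p : Rd d × Rd d => c₁ p.1 x p.2) (hc₁₀ : ∀ x y z, 0 ≤ c₁ x y z)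
    (hC : ∫ y, ∫ z, c₁ x y z = C) (hC' : ∫ y, ∫ z, c₁ y x z = C)
    (hφm : Measurable φ) (hφ : Integrable φ) (hφ₀ : ∀ u, 0 ≤ φ u) (hΦ : ∫ u, φ u = Φ)
    (ha : Measurable a) (hb : Measurable b) (haM : ∀ u, a u ∈ Icc 0 M)
    (hbM : ∀ u, b u ∈ Icc 0 M) (hab : ∀ u, |a u - b u| ≤ δ) :
    |binaryBlocked c₁ φ a x - binaryBlocked c₁ φ b x|
      ≤ 2 * C * (Φ * δ * M ^ 2 + 2 * M * δ) := by
  have hE := abs_one_sub_expNegConv_sub_le hφ hφ₀ hΦ ha hb haM hbM hab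
  have hEa := abs_one_sub_expNegConv_le_one hφ₀ fun u => (haM u).1
  have hEb := abs_one_sub_expNegConv_le_one hφ₀ fun u => (hbM u).1
  have hEa_meas := measurable_expNegConv hφm ha
  have hEb_meas := measurable_expNegConv hφm hb
  have haM' u := abs_le_of_mem_Icc_zero (haM u)
  have hbM' u := abs_le_of_mem_Icc_zero (hbM u)
  have hk : Integrable fun p : Rd d × Rd d => c₁ x p.1 p.2 + c₁ p.1 x p.2 := hc₁.add hc₁'
  have hkC : ∫ y, ∫ z, (c₁ x y z + c₁ y x z) = 2 * C := by
    rw [integral_integral hk, integral_add (μ := volume.prod volume) hc₁ hc₁',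
      ← integral_integral hc₁, ← integral_integral (f := fun y z => c₁ y x z) hc₁', hC, hC',
      two_mul]
  have key := abs_integral_integral_mul_sub_le (k := fun y z => c₁ x y z + c₁ y x z)
    (F := fun y z => (1 - expNegConv φ a z) * a x * a y)
    (G := fun y z => (1 - expNegConv φ b z) * b x * b y)
    hk (fun y z => add_nonneg (hc₁₀ x y z) (hc₁₀ y x z)) (by fun_prop) (by fun_prop)
    (fun y z => abs_mul_mul_le_of_le (hEa z) (haM' x) (haM' y))
    (fun y z => abs_mul_mul_le_of_le (hEb z) (hbM' x) (hbM' y))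
    (fun y z => abs_mul_mul_sub_mul_mul_le_of_le (hEa z) (hEb z) (hbM' x) (haM' y) (hE z)
      (hab x) (hab y))
  simpa only [binaryBlocked, mul_assoc, hkC] using key

lemma abs_unaryArrival_sub_le (hc₂ : Integrable fun y => c₂ y x) (hc₂₀ : ∀ x y, 0 ≤ c₂ x y)
    (hC : ∫ y, c₂ y x = C) (hφ : Integrable φ) (hφ₀ : ∀ u, 0 ≤ φ u) (hΦ : ∫ u, φ u = Φ)
    (ha : Measurable a) (hb : Measurable b) (haM : ∀ u, a u ∈ Icc 0 M)
    (hbM : ∀ u, b u ∈ Icc 0 M) (hab : ∀ u, |a u - b u| ≤ δ) :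
    |unaryArrival c₂ φ a x - unaryArrival c₂ φ b x| ≤ C * (Φ * δ * M + δ) := by
  have hE := abs_expNegConv_sub_le hφ hφ₀ hΦ ha hb haM hbM hab x
  have hEa := abs_expNegConv_le_one hφ₀ (fun u => (haM u).1) x
  have hEb := abs_expNegConv_le_one hφ₀ (fun u => (hbM u).1) x
  have key := abs_integral_mul_sub_integral_mul_le (k := fun y => c₂ y x)
    (F := fun y => expNegConv φ a x * a y) (G := fun y => expNegConv φ b x * b y)
    hc₂ (fun y => hc₂₀ y x) (by fun_prop) (by fun_prop)
    (fun y => abs_mul_le_of_le hEa (abs_le_of_mem_Icc_zero (haM y)))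
    (fun y => abs_mul_le_of_le hEb (abs_le_of_mem_Icc_zero (hbM y)))
    (fun y => abs_mul_sub_mul_le_of_le hEa (abs_le_of_mem_Icc_zero (hbM y)) hE (hab y))
  simpa only [unaryArrival, mul_assoc, hC] using key

lemma abs_unaryBlocked_sub_le (hc₂ : Integrable fun y => c₂ x y) (hc₂₀ : ∀ x y, 0 ≤ c₂ x y)
    (hC : ∫ y, c₂ x y = C) (hφm : Measurable φ) (hφ : Integrable φ) (hφ₀ : ∀ u, 0 ≤ φ u)
    (hΦ : ∫ u, φ u = Φ) (ha : Measurable a) (hb : Measurable b) (haM : ∀ u, a u ∈ Icc 0 M)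
    (hbM : ∀ u, b u ∈ Icc 0 M) (hab : ∀ u, |a u - b u| ≤ δ) :
    |unaryBlocked c₂ φ a x - unaryBlocked c₂ φ b x| ≤ C * (Φ * δ * M + δ) := by
  have hE := abs_one_sub_expNegConv_sub_le hφ hφ₀ hΦ ha hb haM hbM hab
  have hEa := abs_one_sub_expNegConv_le_one hφ₀ fun u => (haM u).1
  have hEb := abs_one_sub_expNegConv_le_one hφ₀ fun u => (hbM u).1
  have hEa_meas := measurable_expNegConv hφm ha
  have hEb_meas := measurable_expNegConv hφm hb
  have key := abs_integral_mul_sub_integral_mul_le (k := fun y => c₂ x y)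
    (F := fun y => (1 - expNegConv φ a y) * a x) (G := fun y => (1 - expNegConv φ b y) * b x)
    hc₂ (hc₂₀ x) (by fun_prop) (by fun_prop)
    (fun y => abs_mul_le_of_le (hEa y) (abs_le_of_mem_Icc_zero (haM x)))
    (fun y => abs_mul_le_of_le (hEb y) (abs_le_of_mem_Icc_zero (hbM x)))
    (fun y => abs_mul_sub_mul_le_of_le (hEa y) (abs_le_of_mem_Icc_zero (hbM x)) (hE y) (hab x))
  simpa only [unaryBlocked, mul_assoc, hC] using key

end GainTerms

lemma abs_R2_sub_R2_le {d : ℕ} {c₁ : Rd d → Rd d → Rd d → ℝ} {c₂ : Rd d → Rd d → ℝ}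
    {φ₁ φ₂ a b : Rd d → ℝ} {C1 C2 Φ₁ Φ₂ M δ : ℝ}
    (hc₁₀ : ∀ x y z, 0 ≤ c₁ x y z)
    (hc₁int₁₂ : ∀ z, Integrable fun p : Rd d × Rd d => c₁ p.1 p.2 z)
    (hc₁int₁₃ : ∀ y, Integrable fun p : Rd d × Rd d => c₁ p.1 y p.2)
    (hc₁int₂₃ : ∀ x, Integrable fun p : Rd d × Rd d => c₁ x p.1 p.2)
    (hc₁val₁₂ : ∀ z, ∫ x, ∫ y, c₁ x y z = C1) (hc₁val₁₃ : ∀ y, ∫ x, ∫ z, c₁ x y z = C1)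
    (hc₁val₂₃ : ∀ x, ∫ y, ∫ z, c₁ x y z = C1)
    (hc₂₀ : ∀ x y, 0 ≤ c₂ x y) (hc₂int₁ : ∀ y, Integrable fun x => c₂ x y)
    (hc₂int₂ : ∀ x, Integrable fun y => c₂ x y) (hc₂val₁ : ∀ y, ∫ x, c₂ x y = C2)
    (hc₂val₂ : ∀ x, ∫ y, c₂ x y = C2)
    (hφ₁m : Measurable φ₁) (hφ₁ : Integrable φ₁) (hφ₁₀ : ∀ u, 0 ≤ φ₁ u) (hΦ₁ : ∫ u, φ₁ u = Φ₁)
    (hφ₂m : Measurable φ₂) (hφ₂ : Integrable φ₂) (hφ₂₀ : ∀ u, 0 ≤ φ₂ u) (hΦ₂ : ∫ u, φ₂ u = Φ₂)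
    (ha : Measurable a) (hb : Measurable b) (haM : ∀ u, a u ∈ Icc 0 M)
    (hbM : ∀ u, b u ∈ Icc 0 M) (hab : ∀ u, |a u - b u| ≤ δ) (x : Rd d) :
    |R2 c₁ c₂ φ₁ φ₂ a x - R2 c₁ c₂ φ₁ φ₂ b x|
      ≤ 3/2 * C1 * (Φ₁ * δ * M ^ 2 + 2 * M * δ) + 2 * C2 * (Φ₂ * δ * M + δ) := by
  have h₁ := abs_le.1 <| abs_binaryArrival_sub_le (hc₁int₁₂ x) hc₁₀ (hc₁val₁₂ x) hφ₁ hφ₁₀ hΦ₁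
    ha hb haM hbM hab
  have h₂ := abs_le.1 <| abs_binaryBlocked_sub_le (hc₁int₂₃ x) (hc₁int₁₃ x) hc₁₀
    (hc₁val₂₃ x) (hc₁val₁₃ x) hφ₁m hφ₁ hφ₁₀ hΦ₁ ha hb haM hbM hab
  have h₃ := abs_le.1 <| abs_unaryArrival_sub_le (hc₂int₁ x) hc₂₀ (hc₂val₁ x) hφ₂ hφ₂₀ hΦ₂
    ha hb haM hbM hab
  have h₄ := abs_le.1 <| abs_unaryBlocked_sub_le (hc₂int₂ x) hc₂₀ (hc₂val₂ x) hφ₂m hφ₂ hφ₂₀ hΦ₂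
    ha hb haM hbM hab
  rw [R2_eq, R2_eq, abs_le]
  constructor <;> linarith [h₁.1, h₁.2, h₂.1, h₂.2, h₃.1, h₃.2, h₄.1, h₄.2]

section WeightedNorm

variable {d : ℕ}

lemma abs_le_linf {f : Rd d → ℝ} {M : ℝ} (hf : ∀ x, |f x| ≤ M) (x : Rd d) : |f x| ≤ linf f :=
  le_ciSup ⟨M, by rintro _ ⟨y, rfl⟩; exact hf y⟩ x

lemma linf_le {f : Rd d → ℝ} {M : ℝ} (hf : ∀ x, |f x| ≤ M) : linf f ≤ M :=
  ciSup_le hf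

lemma linf_le_linf_sub_add {f g : Rd d → ℝ} {Mf Mg : ℝ} (hf : ∀ x, |f x| ≤ Mf)
    (hg : ∀ x, |g x| ≤ Mg) : linf f ≤ linf (fun x => f x - g x) + linf g := by
  have hfg x : |f x - g x| ≤ Mf + Mg := (abs_sub _ _).trans (add_le_add (hf x) (hg x))
  refine linf_le fun x => ?_
  calc |f x| = |(f x - g x) + g x| := by rw [sub_add_cancel]
    _ ≤ |f x - g x| + |g x| := abs_add_le _ _
    _ ≤ linf (fun x => f x - g x) + linf g :=
        add_le_add (abs_le_linf (f := fun x => f x - g x) hfg x) (abs_le_linf hg x)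

lemma LinfContOn.continuousOn_linf {S : Set ℝ} {ρ : ℝ → Rd d → ℝ} (hρ : LinfContOn S ρ)
    (hρS : ∀ t ∈ S, MemLinf (ρ t)) : ContinuousOn (fun t => linf (ρ t)) S := by
  refine fun t ht => Metric.continuousWithinAt_iff.2 fun ε hε => ?_
  obtain ⟨δ, hδ, hclose⟩ := hρ t ht ε hε
  refine ⟨δ, hδ, fun s hs hst => ?_⟩
  obtain ⟨Ms, hMs⟩ := (hρS s hs).2
  obtain ⟨Mt, hMt⟩ := (hρS t ht).2
  have hts : linf (fun x => ρ t x - ρ s x) = linf (fun x => ρ s x - ρ t x) := by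
    simp only [linf, abs_sub_comm]
  have hclose_st := hclose s hs hst
  rw [Real.dist_eq, abs_lt]
  constructor <;> linarith [linf_le_linf_sub_add hMs hMt, linf_le_linf_sub_add hMt hMs]

lemma abs_le_exp_mul_normTg {T γ C2 C : ℝ} {f : ℝ → Rd d → ℝ}
    (hC : ∀ t ∈ Icc (0:ℝ) T, linf (f t) ≤ C) (hf : ∀ t ∈ Icc (0:ℝ) T, ∃ M, ∀ x, |f t x| ≤ M)
    {s : ℝ} (hs : s ∈ Icc (0:ℝ) T) (x : Rd d) :
    |f s x| ≤ Real.exp (γ * C2 * s) * normTg T γ C2 f := by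
  have hbdd :
      BddAbove (range fun t : Icc (0:ℝ) T => Real.exp (-(γ * C2 * t.1)) * linf (f t.1)) := by
    refine ⟨Real.exp (|γ * C2| * T) * max C 0, ?_⟩
    rintro _ ⟨⟨t, ht⟩, rfl⟩
    have hexp : Real.exp (-(γ * C2 * t)) ≤ Real.exp (|γ * C2| * T) := by
      refine Real.exp_le_exp.2 ((neg_le_abs _).trans ?_)
      rw [abs_mul, abs_of_nonneg ht.1]
      exact mul_le_mul_of_nonneg_left ht.2 (abs_nonneg _)
    exact mul_le_mul hexp (le_max_of_le_left (hC t ht)) (Real.iSup_nonneg fun _ => abs_nonneg _)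
      (Real.exp_nonneg _)
  have hweighted : Real.exp (-(γ * C2 * s)) * linf (f s) ≤ normTg T γ C2 f :=
    le_ciSup hbdd (⟨s, hs⟩ : Icc (0:ℝ) T)
  obtain ⟨M, hM⟩ := hf s hs
  calc |f s x| ≤ linf (f s) := abs_le_linf hM x
    _ = Real.exp (γ * C2 * s) * (Real.exp (-(γ * C2 * s)) * linf (f s)) := by
        rw [← mul_assoc, ← Real.exp_add, add_neg_cancel, Real.exp_zero, one_mul]
    _ ≤ Real.exp (γ * C2 * s) * normTg T γ C2 f := by gcongr

lemma memB.exists_linf_le {T γ C2 r : ℝ} {ρ : ℝ → Rd d → ℝ} (hρ : memB T γ C2 r ρ) :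
    ∃ C, ∀ t ∈ Icc (0:ℝ) T, linf (ρ t) ≤ C := by
  obtain ⟨C, hC⟩ := isCompact_Icc.exists_bound_of_continuousOn (hρ.1.continuousOn_linf hρ.2.1)
  exact ⟨C, fun t ht => (le_abs_self _).trans (hC t ht)⟩

lemma memB.mem_Icc {T γ C2 r : ℝ} {ρ : ℝ → Rd d → ℝ} (hρ : memB T γ C2 r ρ) {s : ℝ}
    (hs : s ∈ Icc (0:ℝ) T) (x : Rd d) : ρ s x ∈ Icc 0 (Real.exp (γ * C2 * s) * r) := by
  obtain ⟨C, hC⟩ := hρ.exists_linf_le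
  have hle := abs_le_exp_mul_normTg (γ := γ) (C2 := C2) hC (fun t ht => (hρ.2.1 t ht).2) hs x
  refine ⟨hρ.2.2.1 s hs x, (le_abs_self _).trans (hle.trans ?_)⟩
  exact mul_le_mul_of_nonneg_left hρ.2.2.2 (Real.exp_nonneg _)

lemma memB.abs_sub_le {T γ C2 r : ℝ} {ρ ψ : ℝ → Rd d → ℝ} (hρ : memB T γ C2 r ρ)
    (hψ : memB T γ C2 r ψ) {s : ℝ} (hs : s ∈ Icc (0:ℝ) T) (x : Rd d) :
    |ρ s x - ψ s x| ≤ Real.exp (γ * C2 * s) * normTg T γ C2 (fun t x => ρ t x - ψ t x) := by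
  obtain ⟨Cρ, hCρ⟩ := hρ.exists_linf_le
  obtain ⟨Cψ, hCψ⟩ := hψ.exists_linf_le
  have hbound t (ht : t ∈ Icc (0:ℝ) T) x : |ρ t x - ψ t x| ≤ linf (ρ t) + linf (ψ t) := by
    obtain ⟨Mρ, hMρ⟩ := (hρ.2.1 t ht).2
    obtain ⟨Mψ, hMψ⟩ := (hψ.2.1 t ht).2
    exact (abs_sub _ _).trans (add_le_add (abs_le_linf hMρ x) (abs_le_linf hMψ x))
  refine abs_le_exp_mul_normTg (C := Cρ + Cψ) (fun t ht => ?_) (fun t ht => ⟨_, hbound t ht⟩) hs x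
  exact (linf_le (hbound t ht)).trans (add_le_add (hCρ t ht) (hCψ t ht))

end WeightedNorm

theorem statement7_general {d : ℕ}
    (c₁ : Rd d → Rd d → Rd d → ℝ) (C1 : ℝ)
    (hc₁nn : ∀ x y z, 0 ≤ c₁ x y z)
    (hc₁int₁₂ : ∀ z, Integrable fun p : Rd d × Rd d => c₁ p.1 p.2 z)
    (hc₁int₁₃ : ∀ y, Integrable fun p : Rd d × Rd d => c₁ p.1 y p.2)
    (hc₁int₂₃ : ∀ x, Integrable fun p : Rd d × Rd d => c₁ x p.1 p.2)
    (hc₁val₁₂ : ∀ z, (∫ x, ∫ y, c₁ x y z) = C1)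
    (hc₁val₁₃ : ∀ y, (∫ x, ∫ z, c₁ x y z) = C1)
    (hc₁val₂₃ : ∀ x, (∫ y, ∫ z, c₁ x y z) = C1)
    (c₂ : Rd d → Rd d → ℝ) (C2 : ℝ)
    (hc₂nn : ∀ x y, 0 ≤ c₂ x y)
    (hc₂int₁ : ∀ y, Integrable fun x => c₂ x y)
    (hc₂int₂ : ∀ x, Integrable fun y => c₂ x y)
    (hc₂val₁ : ∀ y, (∫ x, c₂ x y) = C2)
    (hc₂val₂ : ∀ x, (∫ y, c₂ x y) = C2)
    (φ₁ : Rd d → ℝ) (Φ₁ : ℝ) (hφ₁meas : Measurable φ₁) (hφ₁nn : ∀ u, 0 ≤ φ₁ u)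
    (hφ₁int : Integrable φ₁) (hφ₁val : (∫ u, φ₁ u) = Φ₁)
    (φ₂ : Rd d → ℝ) (Φ₂ : ℝ) (hφ₂meas : Measurable φ₂) (hφ₂nn : ∀ u, 0 ≤ φ₂ u)
    (hφ₂int : Integrable φ₂) (hφ₂val : (∫ u, φ₂ u) = Φ₂)
    (r γ T' : ℝ)
    (ρ ψ : ℝ → Rd d → ℝ) (hρ : memB T' γ C2 r ρ) (hψ : memB T' γ C2 r ψ) :
    ∀ s ∈ Icc (0:ℝ) T', ∀ x : Rd d,
      |R2 c₁ c₂ φ₁ φ₂ (ρ s) x - R2 c₁ c₂ φ₁ φ₂ (ψ s) x| ≤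
        (3/2 * C1 * Real.exp (γ * C2 * s) *
            (2 * Real.exp (γ * C2 * s) * r + Real.exp (2 * γ * C2 * s) * Φ₁ * r^2)
          + 2 * C2 * Real.exp (γ * C2 * s) * (Real.exp (γ * C2 * s) * Φ₂ * r + 1))
          * normTg T' γ C2 (fun t x => ρ t x - ψ t x) := by
  intro s hs x
  have hR2 := abs_R2_sub_R2_le hc₁nn hc₁int₁₂ hc₁int₁₃ hc₁int₂₃ hc₁val₁₂ hc₁val₁₃ hc₁val₂₃
    hc₂nn hc₂int₁ hc₂int₂ hc₂val₁ hc₂val₂ hφ₁meas hφ₁int hφ₁nn hφ₁val hφ₂meas hφ₂int hφ₂nn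
    hφ₂val (hρ.2.1 s hs).1 (hψ.2.1 s hs).1 (hρ.mem_Icc hs) (hψ.mem_Icc hs)
    (hρ.abs_sub_le hψ hs) x
  refine hR2.trans_eq ?_
  rw [show 2 * γ * C2 * s = γ * C2 * s + γ * C2 * s by ring, Real.exp_add]
  ring

theorem statement7 {d : ℕ} (hd : 1 ≤ d)
    (c₁ : Rd d → Rd d → Rd d → ℝ) (C1 : ℝ)
    (hc₁meas : Measurable fun p : Rd d × Rd d × Rd d => c₁ p.1 p.2.1 p.2.2)
    (hc₁nn : ∀ x y z, 0 ≤ c₁ x y z)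
    (hc₁sym : ∀ x y z, c₁ x y z = c₁ y x z)
    (hc₁int₁₂ : ∀ z, Integrable fun p : Rd d × Rd d => c₁ p.1 p.2 z)
    (hc₁int₁₃ : ∀ y, Integrable fun p : Rd d × Rd d => c₁ p.1 y p.2)
    (hc₁int₂₃ : ∀ x, Integrable fun p : Rd d × Rd d => c₁ x p.1 p.2)
    (hc₁val₁₂ : ∀ z, (∫ x, ∫ y, c₁ x y z) = C1)
    (hc₁val₁₃ : ∀ y, (∫ x, ∫ z, c₁ x y z) = C1)
    (hc₁val₂₃ : ∀ x, (∫ y, ∫ z, c₁ x y z) = C1)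
    (c₂ : Rd d → Rd d → ℝ) (C2 : ℝ)
    (hc₂meas : Measurable fun p : Rd d × Rd d => c₂ p.1 p.2)
    (hc₂nn : ∀ x y, 0 ≤ c₂ x y)
    (hc₂int₁ : ∀ y, Integrable fun x => c₂ x y)
    (hc₂int₂ : ∀ x, Integrable fun y => c₂ x y)
    (hc₂val₁ : ∀ y, (∫ x, c₂ x y) = C2)
    (hc₂val₂ : ∀ x, (∫ y, c₂ x y) = C2)
    (φ₁ : Rd d → ℝ) (Φ₁ : ℝ) (hφ₁meas : Measurable φ₁) (hφ₁nn : ∀ u, 0 ≤ φ₁ u)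
    (hφ₁int : Integrable φ₁) (hφ₁val : (∫ u, φ₁ u) = Φ₁)
    (φ₂ : Rd d → ℝ) (Φ₂ : ℝ) (hφ₂meas : Measurable φ₂) (hφ₂nn : ∀ u, 0 ≤ φ₂ u)
    (hφ₂int : Integrable φ₂) (hφ₂val : (∫ u, φ₂ u) = Φ₂)
    (r γ T' : ℝ) (hr : 0 < r) (hγ : 0 < γ) (hT' : 0 < T')
    (ρ ψ : ℝ → Rd d → ℝ) (hρ : memB T' γ C2 r ρ) (hψ : memB T' γ C2 r ψ) :
    ∀ s ∈ Icc (0:ℝ) T', ∀ x : Rd d,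
      |R2 c₁ c₂ φ₁ φ₂ (ρ s) x - R2 c₁ c₂ φ₁ φ₂ (ψ s) x| ≤
        (3/2 * C1 * Real.exp (γ * C2 * s) *
            (2 * Real.exp (γ * C2 * s) * r + Real.exp (2 * γ * C2 * s) * Φ₁ * r^2)
          + 2 * C2 * Real.exp (γ * C2 * s) * (Real.exp (γ * C2 * s) * Φ₂ * r + 1))
          * normTg T' γ C2 (fun t x => ρ t x - ψ t x) :=
  statement7_general c₁ C1 hc₁nn hc₁int₁₂ hc₁int₁₃ hc₁int₂₃ hc₁val₁₂ hc₁val₁₃ hc₁val₂₃ c₂ C2 hc₂nn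
    hc₂int₁ hc₂int₂ hc₂val₁ hc₂val₂ φ₁ Φ₁ hφ₁meas hφ₁nn hφ₁int hφ₁val φ₂ Φ₂ hφ₂meas hφ₂nn hφ₂int
    hφ₂val r γ T' ρ ψ hρ hψ
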